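/- For all p, q ∈ ℝ and α, β, γ, δ ∈ ℂ, the pairing of the bra ψ† q γ δ with the ket ψ p α β equals ((conj γ)*α + (conj δ)*β) • (1 + ((p - q)²/2)•E). (The Grassmann-valued transition amplitude between two general pure superqubits.) -/
import Mathlib


noncomputable section

abbrev Λ : Type := ExteriorAlgebra ℂ (Fin 2 → ℂ)

def η : Λ := ExteriorAlgebra.ι ℂ (Pi.single 0 1)

def η' : Λ := ExteriorAlgebra.ι ℂ (Pi.single 1 1)

def E : Λ := η * η'

/-- The superqubit ket `ψ p α β`. -/
def ψ (p : ℝ) (α β : ℂ) : Fin 3 → Λ :=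
  ![α • (1 + ((p ^ 2 / 2 : ℝ) : ℂ) • E),
    β • (1 + ((p ^ 2 / 2 : ℝ) : ℂ) • E),
    (p : ℂ) • (α • η - β • η')]

/-- The superqubit bra `ψ† p α β`. -/
def ψbra (p : ℝ) (α β : ℂ) : Fin 3 → Λ :=
  ![(starRingEnd ℂ α) • (1 + ((p ^ 2 / 2 : ℝ) : ℂ) • E),
    (starRingEnd ℂ β) • (1 + ((p ^ 2 / 2 : ℝ) : ℂ) • E),
    (p : ℂ) • ((starRingEnd ℂ α) • η' + (starRingEnd ℂ β) • η)]

lemma hηη : η * η = 0 := ExteriorAlgebra.ι_sq_zero _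

lemma hη'η' : η' * η' = 0 := ExteriorAlgebra.ι_sq_zero _

lemma hE : η * η' = E := rfl

lemma hswap : η' * η = -E := by
  have h : η * η' + η' * η = 0 :=
    ExteriorAlgebra.ι_add_mul_swap (R := ℂ) (Pi.single 0 1) (Pi.single 1 1)
  rw [eq_neg_iff_add_eq_zero, add_comm]
  exact h

lemma hEE : E * E = 0 := by
  rw [E, mul_assoc, ← mul_assoc η' η, hswap, E]
  simp [mul_assoc, ← mul_assoc η' η', hη'η']

lemma hEη : E * η = 0 := by
  rw [E, mul_assoc, hswap]; simp [E, ← mul_assoc, hηη]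

lemma hηE : η * E = 0 := by rw [E, ← mul_assoc, hηη]; simp

lemma hEη' : E * η' = 0 := by rw [E, mul_assoc, hη'η']; simp

lemma hη'E : η' * E = 0 := by
  rw [E, ← mul_assoc, hswap, E]
  simp [mul_assoc, ← mul_assoc η' η', hη'η']

theorem transition_amplitude (p q : ℝ) (α β γ δ : ℂ) :
    ∑ i : Fin 3, ψbra q γ δ i * ψ p α β i =
      ((starRingEnd ℂ γ) * α + (starRingEnd ℂ δ) * β) •
        (1 + (((p - q) ^ 2 / 2 : ℝ) : ℂ) • E) := by
  simp only [Fin.sum_univ_three, ψ, ψbra, Matrix.cons_val_zero, Matrix.cons_val_one,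
    Matrix.head_cons, Matrix.cons_val_two, Matrix.tail_cons]
  simp only [mul_add, add_mul, mul_sub, sub_mul, smul_add, smul_sub, smul_smul,
    Algebra.smul_mul_assoc, Algebra.mul_smul_comm, mul_one, one_mul,
    hηη, hη'η', hswap, hEE, hEη, hηE, hEη', hη'E, hE, smul_neg, smul_zero]
  push_cast
  match_scalars <;> ring
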